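/- arXiv:2304.06348 — 2 statements merged into one kernel-verified Lean document; each statement's English description precedes it below -/
import Mathlib

section
/- Let Φ be a first-order sentence over Σ having a finitely universal model set 𝓘, and let Ψ = ∀Σ'.Ψ* be a homomorphism-closed ∀SO sentence. Then Φ ⊭ Ψ (i.e., there exists an instance satisfying Φ but not Ψ) if and only if there exists I ∈ 𝓘 with I ⊭ Ψ. -/
/-
STATEMENT 0: Let Φ be a first-order sentence over Σ having a finitely universal
model set 𝓘, and let Ψ = ∀Σ.Ψ* be a homomorphism-closed ∀SO sentence. Then
Φ ⊭ Ψ (i.e., there exists an instance satisfying Φ but not Ψ) if and only if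
there exists I ∈ 𝓘 with I ⊭ Ψ.
-/

namespace Stmt0

/-- Terms: constants and nulls, each drawn from a countably infinite set. -/
inductive GTerm where
  | const : ℕ → GTerm
  | null  : ℕ → GTerm
  deriving DecidableEq

/-- A (finite, in applications) relational signature. -/
structure Signature where
  symbols : Type
  arity : symbols → ℕ

/-- An atom `R(t₁,…,tₙ)` over a signature. -/
structure Atom (σ : Signature) where
  rel : σ.symbols
  args : Fin (σ.arity rel) → GTerm

/-- An instance is a set of atoms. -/
abbrev Inst (σ : Signature) : Type := Set (Atom σ)

/-- The active domain of an instance: all terms occurring in its atoms. -/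
def adom {σ : Signature} (I : Inst σ) : Set GTerm :=
  {t | ∃ a ∈ I, ∃ i, a.args i = t}

/-- `h` is a homomorphism from `I` to `J`: identity on constants, maps atoms of `I`
into `J`. -/
def IsHom {σ : Signature} (I J : Inst σ) (h : GTerm → GTerm) : Prop :=
  (∀ c : ℕ, h (GTerm.const c) = GTerm.const c) ∧
    ∀ a ∈ I, (⟨a.rel, fun i => h (a.args i)⟩ : Atom σ) ∈ J

/-- There is a homomorphism from `I` to `J`. -/
def HomTo {σ : Signature} (I J : Inst σ) : Prop := ∃ h, IsHom I J h

/-- First-order terms: variables and constants. -/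
inductive FOTerm where
  | var : ℕ → FOTerm
  | cst : ℕ → FOTerm

def FOTerm.fv : FOTerm → Set ℕ
  | .var n => {n}
  | .cst _ => ∅

/-- First-order formulas over a signature (atoms, equality, falsum, implication,
universal quantification form a complete set of connectives). -/
inductive FO (σ : Signature) where
  | rel : (R : σ.symbols) → (Fin (σ.arity R) → FOTerm) → FO σ
  | eq : FOTerm → FOTerm → FO σ
  | fls : FO σ
  | imp : FO σ → FO σ → FO σ
  | all : ℕ → FO σ → FO σ

/-- Free variables of a formula. -/
def FO.fv {σ : Signature} : FO σ → Set ℕ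
  | .rel _ ts => ⋃ i, (ts i).fv
  | .eq t u => t.fv ∪ u.fv
  | .fls => ∅
  | .imp φ ψ => φ.fv ∪ ψ.fv
  | .all n φ => φ.fv \ {n}

def FOTerm.eval (v : ℕ → GTerm) : FOTerm → GTerm
  | .var n => v n
  | .cst c => GTerm.const c

/-- Tarskian satisfaction of a formula in an instance `I` (viewed as a first-order
structure whose domain is `adom I`), under an assignment `v`. -/
def FOSat {σ : Signature} (I : Inst σ) (v : ℕ → GTerm) : FO σ → Prop
  | .rel R ts => (⟨R, fun i => (ts i).eval v⟩ : Atom σ) ∈ I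
  | .eq t u => t.eval v = u.eval v
  | .fls => False
  | .imp φ ψ => FOSat I v φ → FOSat I v ψ
  | .all n φ => ∀ t ∈ adom I, FOSat I (Function.update v n t) φ

/-- Satisfaction of an FO sentence (a closed formula: all assignments agree). -/
def Sat {σ : Signature} (I : Inst σ) (φ : FO σ) : Prop := ∀ v, FOSat I v φ

/-- Disjoint union of two signatures. -/
def Signature.sum (σ σ' : Signature) : Signature :=
  ⟨σ.symbols ⊕ σ'.symbols, Sum.elim σ.arity σ'.arity⟩

/-- The (Σ∪Σ')-structure obtained from a Σ-instance `I` and an interpretation `J`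
of the Σ'-symbols. -/
def sumInst {σ σ' : Signature} (I : Inst σ) (J : Inst σ') : Inst (σ.sum σ') :=
  {a | (∃ b ∈ I, a = (⟨Sum.inl b.rel, b.args⟩ : Atom (σ.sum σ'))) ∨
       (∃ b ∈ J, a = (⟨Sum.inr b.rel, b.args⟩ : Atom (σ.sum σ')))}

/-- `I ⊨ ∀Σ'.Ψ`: for every interpretation of the Σ'-symbols by relations on
`adom I`, the resulting (Σ∪Σ')-structure satisfies `Ψ`. -/
def SatASO {σ σ' : Signature} (I : Inst σ) (Ψ : FO (σ.sum σ')) : Prop :=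
  ∀ J : Inst σ', adom J ⊆ adom I → ∀ v, FOSat (sumInst I J) v Ψ

/-- The ∀SO sentence `∀Σ'.Ψ` is homomorphism-closed. -/
def HomClosed {σ σ' : Signature} (Ψ : FO (σ.sum σ')) : Prop :=
  ∀ I J : Inst σ, SatASO I Ψ → HomTo I J → SatASO J Ψ

/-- `S` is a finitely universal model set for `Φ`: every member satisfies `Φ`, and
for every instance `J ⊨ Φ` there is `I ∈ S` such that every finite subinstance of
`I` admits a homomorphism into `J`. -/
def FinitelyUniversal {σ : Signature} (Φ : FO σ) (S : Set (Inst σ)) : Prop :=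
  (∀ I ∈ S, Sat I Φ) ∧
    ∀ J : Inst σ, Sat J Φ →
      ∃ I ∈ S, ∀ I' : Inst σ, I'.Finite → I' ⊆ I → HomTo I' J

/-
Only `⇒` needs work. Given `J ⊨ Φ` with `J ⊭ ∀Σ'.Ψ`, take `I ∈ 𝓘` whose finite parts map into
`J`. A homomorphism `I → M` with `M ⊭ ∀Σ'.Ψ` is the same thing as a model of a first-order
theory: the diagram of `I`, distinctness of the constants, `¬Ψ` relativised to the active
domain, and the requirement that the `Σ'`-atoms stay inside the active domain of the `Σ`-atoms.
Each finite part of it is satisfied by `J` itself, so by compactness and Löwenheim–Skolem it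
has a countable model, whose elements can be named by terms to give such an `M`.
Homomorphism closure of `∀Σ'.Ψ` then forces `I ⊭ ∀Σ'.Ψ`.
-/

open FirstOrder Language Structure

section FOSemantics

lemma FOTerm.eval_congr {t : FOTerm} {v w : ℕ → GTerm} (h : ∀ n ∈ t.fv, v n = w n) :
    t.eval v = t.eval w := by
  cases t with
  | var n => exact h n rfl
  | cst m => rfl

lemma FOSat_congr {σ : Signature} {I : Inst σ} (φ : FO σ) {v w : ℕ → GTerm}
    (h : ∀ n ∈ φ.fv, v n = w n) : FOSat I v φ ↔ FOSat I w φ := by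
  induction φ generalizing v w with
  | rel R ts =>
    have hts : ∀ i, (ts i).eval v = (ts i).eval w := fun i =>
      FOTerm.eval_congr fun n hn => h n (Set.mem_iUnion_of_mem i hn)
    simp only [FOSat, hts]
  | eq t u =>
    simp only [FOSat]
    rw [FOTerm.eval_congr fun n hn => h n (Or.inl hn),
      FOTerm.eval_congr fun n hn => h n (Or.inr hn)]
  | fls => rfl
  | imp φ ψ ihφ ihψ =>
    exact imp_congr (ihφ fun n hn => h n (Or.inl hn)) (ihψ fun n hn => h n (Or.inr hn))
  | all n φ ih =>
    refine forall₂_congr fun t _ => ih fun m hm => ?_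
    by_cases hmn : m = n
    · subst hmn; simp
    · simp only [Function.update_of_ne hmn]
      exact h m ⟨hm, hmn⟩

lemma FOSat_iff_of_fv_eq_empty {σ : Signature} {I : Inst σ} {φ : FO σ} (h : φ.fv = ∅)
    (v w : ℕ → GTerm) : FOSat I v φ ↔ FOSat I w φ :=
  FOSat_congr φ (by simp [h])

end FOSemantics

section SumInst

variable {σ σ' : Signature}

lemma mk_inl_mem_sumInst {I : Inst σ} {J : Inst σ'} {R : σ.symbols}
    {args : Fin (σ.arity R) → GTerm} :
    (⟨Sum.inl R, args⟩ : Atom (σ.sum σ')) ∈ sumInst I J ↔ ⟨R, args⟩ ∈ I := by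
  constructor
  · rintro (⟨b, hb, heq⟩ | ⟨b, -, heq⟩)
    · cases b; cases heq; exact hb
    · cases heq
  · exact fun h => Or.inl ⟨_, h, rfl⟩

lemma mk_inr_mem_sumInst {I : Inst σ} {J : Inst σ'} {R : σ'.symbols}
    {args : Fin (σ'.arity R) → GTerm} :
    (⟨Sum.inr R, args⟩ : Atom (σ.sum σ')) ∈ sumInst I J ↔ ⟨R, args⟩ ∈ J := by
  constructor
  · rintro (⟨b, -, heq⟩ | ⟨b, hb, heq⟩)
    · cases heq
    · cases b; cases heq; exact hb
  · exact fun h => Or.inr ⟨_, h, rfl⟩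

def restrictLeft (W : Inst (σ.sum σ')) : Inst σ := {b | ⟨Sum.inl b.rel, b.args⟩ ∈ W}

def restrictRight (W : Inst (σ.sum σ')) : Inst σ' := {b | ⟨Sum.inr b.rel, b.args⟩ ∈ W}

lemma sumInst_restrictLeft_restrictRight (W : Inst (σ.sum σ')) :
    sumInst (restrictLeft W) (restrictRight W) = W := by
  ext ⟨R | R, args⟩
  · exact mk_inl_mem_sumInst
  · exact mk_inr_mem_sumInst

end SumInst

section TermLanguage

instance : Inhabited GTerm := ⟨.const 0⟩

instance : Countable GTerm :=
  Function.Injective.countable (f := fun t => match t with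
    | .const m => (Sum.inl m : ℕ ⊕ ℕ)
    | .null k => Sum.inr k)
    (by rintro (_ | _) (_ | _) h <;> simp_all)

def termLang (τ : Signature) : Language where
  Functions
    | 0 => GTerm
    | _ + 1 => Empty
  Relations n := {R : τ.symbols // τ.arity R = n}

variable {τ : Signature}

namespace termLang

abbrev con (t : GTerm) : (termLang τ).Constants := t

abbrev rel (R : τ.symbols) : (termLang τ).Relations (τ.arity R) := ⟨R, rfl⟩

variable (τ) in
abbrev constVal {N : Type} [(termLang τ).Structure N] (t : GTerm) : N :=
  (con t : (termLang τ).Constants)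

instance (n : ℕ) : Countable ((termLang τ).Functions n) :=
  match n with
  | 0 => inferInstanceAs (Countable GTerm)
  | _ + 1 => inferInstanceAs (Countable Empty)

lemma card_le_aleph0 [Countable τ.symbols] : (termLang τ).card ≤ Cardinal.aleph0 := by
  have (n : ℕ) : Countable ((termLang τ).Relations n) :=
    inferInstanceAs (Countable {R : τ.symbols // τ.arity R = n})
  exact Cardinal.mk_le_aleph0

end termLang

open termLang

def instOf (N : Type) [(termLang τ).Structure N] (g : N → GTerm) : Inst τ :=
  {a | ∃ x, RelMap (rel a.rel) x ∧ a.args = g ∘ x}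

variable {N : Type} [(termLang τ).Structure N]

lemma mk_mem_instOf {g : N → GTerm} (hg : g.Injective) (R : τ.symbols)
    (x : Fin (τ.arity R) → N) : ⟨R, g ∘ x⟩ ∈ instOf N g ↔ RelMap (rel R) x := by
  refine ⟨fun ⟨y, hy, hxy⟩ => ?_, fun h => ⟨x, h, rfl⟩⟩
  rwa [hg.comp_left hxy]

lemma mem_adom_instOf {g : N → GTerm} {t : GTerm} :
    t ∈ adom (instOf (τ := τ) N g) ↔
      ∃ (R : τ.symbols) (x : _), RelMap (rel R) x ∧ ∃ i, g (x i) = t := by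
  constructor
  · rintro ⟨a, ⟨x, hx, hargs⟩, i, rfl⟩
    exact ⟨a.rel, x, hx, i, by rw [hargs]; rfl⟩
  · rintro ⟨R, x, hx, i, rfl⟩
    exact ⟨⟨R, g ∘ x⟩, ⟨x, hx, rfl⟩, i, rfl⟩

@[reducible]
def Inst.toStructure (W : Inst τ) (e : GTerm → GTerm) : (termLang τ).Structure GTerm where
  funMap {n} f _ := match n, f with
    | 0, t => e t
  RelMap R x := ⟨R.1, x ∘ Fin.cast R.2⟩ ∈ W

lemma Inst.instOf_toStructure (W : Inst τ) (e : GTerm → GTerm) :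
    @instOf τ GTerm (W.toStructure e) id = W := by
  let := W.toStructure e
  ext ⟨R, args⟩
  refine ⟨fun ⟨x, hx, hargs⟩ => ?_, fun h => ⟨args, h, rfl⟩⟩
  obtain rfl : args = x := hargs
  exact hx

noncomputable def occurs {ι : Type} [Finite ι] (ρ : ι → τ.symbols) {α : Type} (x : α) :
    (termLang τ).Formula α :=
  Formula.iSup fun j => Formula.iExs (Fin (τ.arity (ρ j)))
    (Relations.formula (rel (ρ j)) (fun i => Term.var (Sum.inr i)) ⊓
      Formula.iSup fun i => Term.equal (Term.var (Sum.inl x)) (Term.var (Sum.inr i)))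

lemma realize_occurs {ι : Type} [Finite ι] (ρ : ι → τ.symbols) {α : Type} (x : α) (v : α → N) :
    (occurs ρ x).Realize v ↔ ∃ j y, RelMap (rel (ρ j)) y ∧ ∃ i, y i = v x := by
  simp only [occurs, Formula.realize_iSup, Formula.realize_iExs, Formula.realize_inf,
    Formula.realize_rel, Formula.realize_equal, Term.realize_var, Sum.elim_inl, Sum.elim_inr]
  exact exists_congr fun j => exists_congr fun y => and_congr_right fun _ =>
    exists_congr fun i => eq_comm

def FOTerm.toTerm : FOTerm → (termLang τ).Term ℕ
  | .var n => Term.var n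
  | .cst m => (con (.const m)).term

/-- Quantifiers are relativised to the active domain. -/
noncomputable def FO.toFormula [Finite τ.symbols] : FO τ → (termLang τ).Formula ℕ
  | .rel R ts => Relations.formula (termLang.rel R) fun i => (ts i).toTerm
  | .eq t u => Term.equal t.toTerm u.toTerm
  | .fls => ⊥
  | .imp φ ψ => φ.toFormula.imp ψ.toFormula
  | .all n φ => Formula.iAlls Unit ((occurs id (Sum.inr ())).imp
      (φ.toFormula.relabel fun m => if m = n then Sum.inr () else Sum.inl m))

variable {g : N → GTerm}

lemma FOTerm.eval_comp (hc : ∀ m, g (constVal τ (.const m) : N) = .const m) (t : FOTerm)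
    (w : ℕ → N) : t.eval (g ∘ w) = g ((t.toTerm (τ := τ)).realize w) := by
  cases t with
  | var n => rfl
  | cst m => exact (hc m).symm.trans (congrArg g Term.realize_constants.symm)

lemma realize_toFormula_all_iff [Finite τ.symbols] (n : ℕ) (φ : FO τ) (w : ℕ → N) :
    (FO.all n φ).toFormula.Realize w ↔
      ∀ x, (∃ (R : τ.symbols) (y : _), RelMap (rel R) y ∧ ∃ i, y i = x) →
        φ.toFormula.Realize (Function.update w n x) := by
  have hupd (x : N) : (Sum.elim w fun _ : Unit => x) ∘
      (fun m => if m = n then Sum.inr () else Sum.inl m) = Function.update w n x := by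
    funext m
    by_cases hm : m = n
    · subst hm; simp
    · simp [hm]
  rw [FO.toFormula, Formula.realize_iAlls]
  simp only [Formula.realize_imp, realize_occurs, Formula.realize_relabel, Sum.elim_inr, id]
  refine ⟨fun H x => ?_, fun H i => ?_⟩
  · rw [← hupd]
    exact H fun _ => x
  · rw [show i = fun _ => i () from rfl, hupd]
    exact H (i ())

theorem FOSat_instOf_iff [Finite τ.symbols] (hg : g.Injective)
    (hc : ∀ m, g (constVal τ (.const m) : N) = .const m) (φ : FO τ) (w : ℕ → N) :
    FOSat (instOf N g) (g ∘ w) φ ↔ φ.toFormula.Realize w := by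
  induction φ generalizing w with
  | rel R ts =>
    simp only [FOSat, FO.toFormula, Formula.realize_rel, FOTerm.eval_comp hc]
    exact mk_mem_instOf hg R _
  | eq t u =>
    simp only [FOSat, FO.toFormula, Formula.realize_equal, FOTerm.eval_comp hc]
    exact hg.eq_iff
  | fls => exact iff_of_false id id
  | imp φ ψ ihφ ihψ => exact imp_congr (ihφ w) (ihψ w)
  | all n φ ih =>
    rw [realize_toFormula_all_iff]
    simp only [FOSat, mem_adom_instOf]
    refine ⟨fun H x hx => ?_, fun H t ⟨R, y, hy, i, hi⟩ => ?_⟩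
    · obtain ⟨R, y, hy, i, rfl⟩ := hx
      rw [← ih, Function.comp_update]
      exact H _ ⟨R, y, hy, i, rfl⟩
    · subst hi
      rw [← Function.comp_update, ih]
      exact H _ ⟨R, y, hy, i, rfl⟩

end TermLanguage

theorem _root_.FirstOrder.Language.Theory.isSatisfiable_image_union {L : Language} {α : Type*}
    {f : α → L.Sentence} {I : Set α} {B : L.Theory}
    (h : ∀ s ⊆ I, s.Finite → Theory.IsSatisfiable (f '' s ∪ B)) :
    Theory.IsSatisfiable (f '' I ∪ B) := by
  refine Theory.isSatisfiable_iff_isFinitelySatisfiable.2 fun T₀ hT₀ => ?_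
  obtain ⟨s, hsI, hs, hT₀s⟩ :=
    Set.exists_subset_image_finite_and (p := fun t => ↑T₀ ⊆ t ∪ B) |>.1
      ⟨↑T₀ ∩ f '' I, Set.inter_subset_right, T₀.finite_toSet.inter_of_left _,
        fun φ hφ => (hT₀ hφ).imp (fun hφI => ⟨hφ, hφI⟩) id⟩
  exact (h s hsI hs).mono hT₀s

theorem _root_.FirstOrder.Language.Theory.exists_countable_model
    {L : FirstOrder.Language.{0, 0}} {T : L.Theory} (hL : L.card ≤ Cardinal.aleph0)
    (h : ∃ M : Theory.ModelType.{0, 0, 0} T, Infinite M) :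
    ∃ N : Theory.ModelType.{0, 0, 0} T, Countable N := by
  obtain ⟨N, hN⟩ := Theory.exists_model_card_eq h Cardinal.aleph0 le_rfl (by simpa using hL)
  exact ⟨N, Cardinal.mk_le_aleph0_iff.1 hN.le⟩

lemma exists_injective_comp_eq_const {N : Type} [Countable N] {c : ℕ → N} (hc : c.Injective) :
    ∃ g : N → GTerm, g.Injective ∧ ∀ m, g (c m) = .const m := by
  obtain ⟨f, hf⟩ := exists_injective_nat N
  refine ⟨Function.extend c GTerm.const (GTerm.null ∘ f), fun x y hxy => ?_,
    hc.extend_apply _ _⟩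
  by_cases hx : ∃ m, c m = x <;> by_cases hy : ∃ m, c m = y
  · obtain ⟨m, rfl⟩ := hx; obtain ⟨m', rfl⟩ := hy
    simp only [hc.extend_apply, GTerm.const.injEq] at hxy
    rw [hxy]
  · obtain ⟨m, rfl⟩ := hx
    simp [hc.extend_apply, Function.extend_apply' _ _ _ hy] at hxy
  · obtain ⟨m, rfl⟩ := hy
    simp [hc.extend_apply, Function.extend_apply' _ _ _ hx] at hxy
  · simpa [Function.extend_apply' _ _ _ hx, Function.extend_apply' _ _ _ hy, hf.eq_iff] using hxy

section CounterTheory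

open termLang

variable {σ σ' : Signature}

instance [Finite σ.symbols] [Finite σ'.symbols] : Finite (σ.sum σ').symbols :=
  inferInstanceAs (Finite (σ.symbols ⊕ σ'.symbols))

variable (σ') in
def atomSentence (a : Atom σ) : (termLang (σ.sum σ')).Sentence :=
  Relations.formula (rel (τ := σ.sum σ') (Sum.inl a.rel)) fun i => (con (a.args i)).term

variable (σ σ') in
def distinctConstsTheory : (termLang (σ.sum σ')).Theory :=
  {φ | ∃ m m', m ≠ m' ∧ φ = (Term.equal (con (.const m)).term (con (.const m')).term).not}

/-- Substituting a constant for the variables is harmless as `Ψ` will be closed. -/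
noncomputable def negSentence [Finite σ.symbols] [Finite σ'.symbols] (Ψ : FO (σ.sum σ')) :
    (termLang (σ.sum σ')).Sentence :=
  (Ψ.toFormula.subst fun _ => (con (.const 0)).term).not

variable (σ σ') in
noncomputable def adomSentence [Finite σ.symbols] [Finite σ'.symbols] :
    (termLang (σ.sum σ')).Sentence :=
  Formula.iAlls Unit ((occurs (τ := σ.sum σ') Sum.inr (Sum.inr ())).imp
    (occurs (τ := σ.sum σ') Sum.inl (Sum.inr ())))

/-- Its countable models, read back as instances, are targets of homomorphisms from `I` that
falsify `∀Σ'.Ψ`. -/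
noncomputable def counterTheory [Finite σ.symbols] [Finite σ'.symbols] (I : Inst σ)
    (Ψ : FO (σ.sum σ')) : (termLang (σ.sum σ')).Theory :=
  atomSentence σ' '' I ∪ (distinctConstsTheory σ σ' ∪ {negSentence Ψ, adomSentence σ σ'})

variable [Finite σ.symbols] [Finite σ'.symbols] {N : Type} [(termLang (σ.sum σ')).Structure N]

lemma model_counterTheory_iff (I : Inst σ) (Ψ : FO (σ.sum σ')) :
    N ⊨ counterTheory I Ψ ↔
      (∀ a ∈ I, RelMap (rel (τ := σ.sum σ') (Sum.inl a.rel))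
        fun i => (constVal (σ.sum σ') (a.args i) : N)) ∧
      (fun m => (constVal (σ.sum σ') (.const m) : N)).Injective ∧
      ¬ Ψ.toFormula.Realize (fun _ => (constVal (σ.sum σ') (.const 0) : N)) ∧
      ∀ x : N, (∃ (R : σ'.symbols) (y : Fin (σ'.arity R) → N),
          RelMap (rel (τ := σ.sum σ') (Sum.inr R)) y ∧ ∃ i, y i = x) →
        ∃ (R : σ.symbols) (y : Fin (σ.arity R) → N),
          RelMap (rel (τ := σ.sum σ') (Sum.inl R)) y ∧ ∃ i, y i = x := by
  simp only [counterTheory, Theory.model_iff, Set.mem_union, Set.mem_insert_iff,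
    Set.mem_singleton_iff, or_imp, forall_and, forall_eq, Set.forall_mem_image]
  refine and_congr ?_ (and_congr ?_ (and_congr ?_ ?_))
  · simp [atomSentence, Sentence.Realize, Formula.realize_rel]
  · have hdist (m m' : ℕ) :
        N ⊨ (Term.equal (con (τ := σ.sum σ') (.const m)).term (con (.const m')).term).not ↔
        (constVal (σ.sum σ') (.const m) : N) ≠ constVal (σ.sum σ') (.const m') := by
      simp [Sentence.Realize, Formula.realize_not, Formula.realize_equal]
    refine ⟨fun h m m' heq => by_contra fun hne => (hdist m m').1 (h _ ⟨m, m', hne, rfl⟩) heq,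
      fun h φ ⟨m, m', hne, hφ⟩ => hφ ▸ (hdist m m').2 (h.ne hne)⟩
  · simp [negSentence, Sentence.Realize, Formula.Realize]
  · rw [Sentence.Realize, adomSentence, Formula.realize_iAlls]
    simp only [Formula.realize_imp]
    refine ⟨fun H x hx => ?_, fun H i hi => ?_⟩
    · exact (realize_occurs _ _ _).1 (H (fun _ => x) ((realize_occurs _ _ _).2 hx))
    · exact (realize_occurs _ _ _).2 (H (i ()) ((realize_occurs _ _ _).1 hi))

end CounterTheory

section Compactness

open termLang

variable {σ σ' : Signature} [Finite σ.symbols] [Finite σ'.symbols] {Ψ : FO (σ.sum σ')}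

lemma model_counterTheory_of_isHom {I₀ J : Inst σ} {K : Inst σ'} (hK : adom K ⊆ adom J)
    (hΨ : Ψ.fv = ∅) {v : ℕ → GTerm} (hv : ¬ FOSat (sumInst J K) v Ψ) {h : GTerm → GTerm}
    (hh : IsHom I₀ J h) :
    @Theory.Model _ GTerm ((sumInst J K).toStructure h) (counterTheory I₀ Ψ) := by
  let := (sumInst J K).toStructure h
  refine (model_counterTheory_iff I₀ Ψ).2 ⟨fun a ha => ?_, fun m m' hmm' => ?_, fun hΨreal => ?_,
    fun x ⟨R, y, hy, i, hi⟩ => ?_⟩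
  · exact mk_inl_mem_sumInst.2 (hh.2 a ha)
  · have : h (.const m) = h (.const m') := hmm'
    rwa [hh.1, hh.1, GTerm.const.injEq] at this
  · have hid (m : ℕ) : id (constVal (σ.sum σ') (.const m) : GTerm) = .const m := hh.1 m
    rw [← FOSat_instOf_iff Function.injective_id hid, Inst.instOf_toStructure] at hΨreal
    exact hv ((FOSat_iff_of_fv_eq_empty hΨ _ _).1 hΨreal)
  · obtain ⟨a, ha, j, rfl⟩ := hK ⟨⟨R, y⟩, mk_inr_mem_sumInst.1 hy, i, hi⟩
    exact ⟨a.rel, a.args, mk_inl_mem_sumInst.2 ha, j, rfl⟩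

lemma counterTheory_isSatisfiable {I J : Inst σ}
    (hfin : ∀ I' : Inst σ, I'.Finite → I' ⊆ I → HomTo I' J) (hJ : ¬ SatASO J Ψ)
    (hΨ : Ψ.fv = ∅) : (counterTheory I Ψ).IsSatisfiable := by
  obtain ⟨K, hK, v, hv⟩ : ∃ K : Inst σ', adom K ⊆ adom J ∧ ∃ v, ¬ FOSat (sumInst J K) v Ψ := by
    simpa [SatASO] using hJ
  refine Theory.isSatisfiable_image_union fun I₀ hI₀ hfinite => ?_
  obtain ⟨h, hh⟩ := hfin I₀ hfinite hI₀
  let := (sumInst J K).toStructure h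
  have := model_counterTheory_of_isHom hK hΨ hv hh
  exact Theory.Model.isSatisfiable (T := counterTheory I₀ Ψ) GTerm

lemma exists_homTo_not_satASO_of_model {I : Inst σ} (N : Type) [Countable N]
    [(termLang (σ.sum σ')).Structure N] (hN : N ⊨ counterTheory I Ψ) :
    ∃ M : Inst σ, HomTo I M ∧ ¬ SatASO M Ψ := by
  obtain ⟨hatoms, hinj, hneg, hadom⟩ := (model_counterTheory_iff I Ψ).1 hN
  obtain ⟨g, hg, hgc⟩ := exists_injective_comp_eq_const hinj
  set W := instOf (τ := σ.sum σ') N g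
  refine ⟨restrictLeft W, ⟨g ∘ constVal (σ.sum σ'), hgc, fun a ha => ?_⟩, fun hM => ?_⟩
  · exact (mk_mem_instOf hg _ _).2 (hatoms a ha)
  · have hK : adom (restrictRight W) ⊆ adom (restrictLeft W) := by
      rintro _ ⟨b, ⟨x, hx, hb⟩, i, rfl⟩
      obtain ⟨R, y, hy, j, hj⟩ := hadom (x i) ⟨b.rel, x, hx, i, rfl⟩
      exact ⟨⟨R, g ∘ y⟩, (mk_mem_instOf hg _ _).2 hy, j, by
        rw [show b.args = g ∘ x from hb]
        exact congrArg g hj⟩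
    have := hM _ hK (g ∘ fun _ => constVal (σ.sum σ') (.const 0))
    rw [sumInst_restrictLeft_restrictRight, FOSat_instOf_iff hg hgc] at this
    exact hneg this

theorem exists_homTo_not_satASO {I J : Inst σ}
    (hfin : ∀ I' : Inst σ, I'.Finite → I' ⊆ I → HomTo I' J) (hJ : ¬ SatASO J Ψ)
    (hΨ : Ψ.fv = ∅) : ∃ M : Inst σ, HomTo I M ∧ ¬ SatASO M Ψ := by
  obtain ⟨M₀⟩ := counterTheory_isSatisfiable hfin hJ hΨ
  have : Infinite M₀ := Infinite.of_injective _ ((model_counterTheory_iff I Ψ).1 M₀.is_model).2.1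
  obtain ⟨N, _⟩ := Theory.exists_countable_model termLang.card_le_aleph0 ⟨M₀, this⟩
  exact exists_homTo_not_satASO_of_model N N.is_model

end Compactness

theorem non_entailment_iff_countermodel_in_universal_set_general
    (σ σ' : Signature) [Finite σ.symbols] [Finite σ'.symbols]
    (Φ : FO σ)
    (S : Set (Inst σ)) (hS : FinitelyUniversal Φ S)
    (Ψ : FO (σ.sum σ')) (hΨclosed : Ψ.fv = ∅) (hΨhom : HomClosed Ψ) :
    (∃ J : Inst σ, Sat J Φ ∧ ¬ SatASO J Ψ) ↔ ∃ I ∈ S, ¬ SatASO I Ψ := by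
  constructor
  · rintro ⟨J, hJΦ, hJ⟩
    obtain ⟨I, hIS, hfin⟩ := hS.2 J hJΦ
    obtain ⟨M, hIM, hM⟩ := exists_homTo_not_satASO hfin hJ hΨclosed
    exact ⟨I, hIS, fun hI => hM (hΨhom I M hI hIM)⟩
  · rintro ⟨I, hIS, hI⟩
    exact ⟨I, hS.1 I hIS, hI⟩

theorem non_entailment_iff_countermodel_in_universal_set
    (σ σ' : Signature) [Finite σ.symbols] [Finite σ'.symbols]
    (har : ∀ s, 1 ≤ σ.arity s) (har' : ∀ s, 1 ≤ σ'.arity s)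
    (Φ : FO σ) (hΦclosed : Φ.fv = ∅)
    (S : Set (Inst σ)) (hS : FinitelyUniversal Φ S)
    (Ψ : FO (σ.sum σ')) (hΨclosed : Ψ.fv = ∅) (hΨhom : HomClosed Ψ) :
    (∃ J : Inst σ, Sat J Φ ∧ ¬ SatASO J Ψ) ↔ ∃ I ∈ S, ¬ SatASO I Ψ :=
  non_entailment_iff_countermodel_in_universal_set_general σ σ' Φ S hS Ψ hΨclosed hΨhom

end Stmt0
end

section
/- Let Σ = {A, E, R} with A unary, E binary, and R ternary, and let I'_grid = {A(eₙ) : n ∈ ℕ} ∪ {E(eₙ, e_{n+1}) : n ∈ ℕ} ∪ {R(eₙ, eₘ, f_{n,m}) : n, m ∈ ℕ}, where the eₙ (n ∈ ℕ) and f_{n,m} (n, m ∈ ℕ) are pairwise distinct terms. Let φ_H(z,z') := ∃x,y,x'.(R(x,y,z) ∧ E(x,x') ∧ R(x',y,z')) and φ_V(z,z') := ∃x,y,y'.(R(x,y,z) ∧ E(y,y') ∧ R(x,y',z')). Then the set of pairs satisfying φ_H in I'_grid is exactly {(f_{n,m}, f_{n+1,m}) : n, m ∈ ℕ}, and the set of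 pairs satisfying φ_V in I'_grid is exactly {(f_{n,m}, f_{n,m+1}) : n, m ∈ ℕ} (so φ_H and φ_V define the horizontal and vertical neighbour relations of an infinite grid on the elements f_{n,m}). -/
namespace Stmt6

inductive GTerm where
  | const : ℕ → GTerm
  | null  : ℕ → GTerm
  deriving DecidableEq

structure Signature where
  symbols : Type
  arity : symbols → ℕ

structure Atom (σ : Signature) where
  rel : σ.symbols
  args : Fin (σ.arity rel) → GTerm

abbrev Inst (σ : Signature) : Type := Set (Atom σ)

inductive GSym where
  | A | E | R

abbrev gridSig : Signature :=
  ⟨GSym, fun s => match s with | .A => 1 | .E => 2 | .R => 3⟩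

def Igrid (e : ℕ → GTerm) (f : ℕ → ℕ → GTerm) : Inst gridSig :=
  {a | (∃ n : ℕ, a = ⟨GSym.A, ![e n]⟩) ∨
       (∃ n : ℕ, a = ⟨GSym.E, ![e n, e (n + 1)]⟩) ∨
       (∃ n m : ℕ, a = ⟨GSym.R, ![e n, e m, f n m]⟩)}

lemma memR (e : ℕ → GTerm) (f : ℕ → ℕ → GTerm) (x y z : GTerm) :
    (⟨GSym.R, ![x, y, z]⟩ : Atom gridSig) ∈ Igrid e f ↔
      ∃ n m : ℕ, x = e n ∧ y = e m ∧ z = f n m := by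
  simp only [Igrid, Set.mem_setOf_eq, Atom.mk.injEq]
  constructor
  · rintro (⟨n, h, -⟩ | ⟨n, h, -⟩ | ⟨n, m, h, hargs⟩)
    · cases h
    · cases h
    · rw [heq_eq_eq, funext_iff] at hargs
      exact ⟨n, m, hargs 0, hargs 1, hargs 2⟩
  · rintro ⟨n, m, rfl, rfl, rfl⟩
    exact .inr (.inr ⟨n, m, trivial, heq_of_eq rfl⟩)

lemma memE (e : ℕ → GTerm) (f : ℕ → ℕ → GTerm) (x y : GTerm) :
    (⟨GSym.E, ![x, y]⟩ : Atom gridSig) ∈ Igrid e f ↔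
      ∃ n : ℕ, x = e n ∧ y = e (n + 1) := by
  simp only [Igrid, Set.mem_setOf_eq, Atom.mk.injEq]
  constructor
  · rintro (⟨n, h, -⟩ | ⟨n, h, hargs⟩ | ⟨n, m, h, -⟩)
    · cases h
    · rw [heq_eq_eq, funext_iff] at hargs
      exact ⟨n, hargs 0, hargs 1⟩
    · cases h
  · rintro ⟨n, rfl, rfl⟩
    exact .inr (.inl ⟨n, trivial, heq_of_eq rfl⟩)

theorem grid_neighbours_definable
    (e : ℕ → GTerm) (f : ℕ → ℕ → GTerm)
    (heInj : Function.Injective e)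
    (hfInj : Function.Injective (fun p : ℕ × ℕ => f p.1 p.2))
    (hef : ∀ k n m : ℕ, e k ≠ f n m) :
    -- φ_H(z,z') = ∃x,y,x'.(R(x,y,z) ∧ E(x,x') ∧ R(x',y,z'))
    (∀ z z' : GTerm,
      (∃ x y x' : GTerm,
          (⟨GSym.R, ![x, y, z]⟩ : Atom gridSig) ∈ Igrid e f ∧
          (⟨GSym.E, ![x, x']⟩ : Atom gridSig) ∈ Igrid e f ∧
          (⟨GSym.R, ![x', y, z']⟩ : Atom gridSig) ∈ Igrid e f)
        ↔ ∃ n m : ℕ, z = f n m ∧ z' = f (n + 1) m) ∧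
    -- φ_V(z,z') = ∃x,y,y'.(R(x,y,z) ∧ E(y,y') ∧ R(x,y',z'))
    (∀ z z' : GTerm,
      (∃ x y y' : GTerm,
          (⟨GSym.R, ![x, y, z]⟩ : Atom gridSig) ∈ Igrid e f ∧
          (⟨GSym.E, ![y, y']⟩ : Atom gridSig) ∈ Igrid e f ∧
          (⟨GSym.R, ![x, y', z']⟩ : Atom gridSig) ∈ Igrid e f)
        ↔ ∃ n m : ℕ, z = f n m ∧ z' = f n (m + 1)) := by
  constructor
  · intro z z'
    constructor
    · rintro ⟨x, y, x', h1, h2, h3⟩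
      rw [memR] at h1 h3; rw [memE] at h2
      obtain ⟨n, m, rfl, rfl, rfl⟩ := h1
      obtain ⟨k, hk, rfl⟩ := h2
      obtain ⟨n', m', hn', hm', rfl⟩ := h3
      obtain rfl := heInj hk
      obtain rfl := heInj hn'.symm
      obtain rfl := heInj hm'
      exact ⟨n, m, rfl, rfl⟩
    · rintro ⟨n, m, rfl, rfl⟩
      exact ⟨e n, e m, e (n + 1),
        (memR e f _ _ _).2 ⟨n, m, rfl, rfl, rfl⟩,
        (memE e f _ _).2 ⟨n, rfl, rfl⟩,
        (memR e f _ _ _).2 ⟨n + 1, m, rfl, rfl, rfl⟩⟩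
  · intro z z'
    constructor
    · rintro ⟨x, y, y', h1, h2, h3⟩
      rw [memR] at h1 h3; rw [memE] at h2
      obtain ⟨n, m, rfl, rfl, rfl⟩ := h1
      obtain ⟨k, hk, rfl⟩ := h2
      obtain ⟨n', m', hn', hm', rfl⟩ := h3
      obtain rfl := heInj hk
      obtain rfl := heInj hn'
      obtain rfl := heInj hm'.symm
      exact ⟨n, m, rfl, rfl⟩
    · rintro ⟨n, m, rfl, rfl⟩
      exact ⟨e n, e m, e (m + 1),
        (memR e f _ _ _).2 ⟨n, m, rfl, rfl, rfl⟩,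
        (memE e f _ _).2 ⟨m, rfl, rfl⟩,
        (memR e f _ _ _).2 ⟨n, m + 1, rfl, rfl, rfl⟩⟩

end Stmt6
end
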